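/- Let Ψ ∈ ℂ^{N×n} satisfy ‖Ψw‖₂ ≤ β‖w‖₂ for all w ∈ ℂ^n and have DFT-incoherence parameter γ, let the deviation model hold with parameter θ ≥ 0, let A = (√N/√m) S Ψ ∈ ℂ^{m×n}, and let v ∈ ℂ^n have at most s nonzero entries. Then E[ Σ_{k=1}^{m} |(Av)_k|⁴ ] ≤ s β² γ² (1 + 2θ) ‖v‖₂⁴ / m, where the expectation is over the random deviations Δ₁,…,Δ_m. -/

import Mathlib

open scoped BigOperators
open MeasureTheory Matrix

noncomputable section

/-- The complex exponential `e(x) = exp(2πix)`. -/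
def ce (x : ℝ) : ℂ := Complex.exp (2 * Real.pi * Complex.I * x)

/-- Half-bandwidth `Ñ = (N-1)/2`. -/
def Nt (N : ℕ) : ℤ := ((N : ℤ) - 1) / 2

/-- Uniform grid point `t_p = (p-1)/N - 1/2` (zero-based index). -/
def tg (N : ℕ) (p : Fin N) : ℝ := (p : ℝ) / N - 1 / 2

/-- Dirichlet interpolation matrix `S ∈ ℂ^{m×N}`. -/
def dirS (N m : ℕ) (tt : Fin m → ℝ) : Matrix (Fin m) (Fin N) ℂ :=
  fun k p => (N : ℂ)⁻¹ * ∑ u ∈ Finset.Icc (-(Nt N)) (Nt N), ce (u * (tg N p - tt k))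

/-- Centered DFT matrix `F ∈ ℂ^{N×N}`. -/
def dftF (N : ℕ) : Matrix (Fin N) (Fin N) ℂ :=
  fun p u => ((Real.sqrt N : ℂ))⁻¹ * ce (-(tg N p) * ((u : ℤ) - Nt N))

/-- DFT-incoherence parameter of `Ψ`. -/
def dftIncoh (N n : ℕ) (Ψ : Matrix (Fin N) (Fin n) ℂ) : ℝ :=
  ⨆ ℓ : Fin n, ∑ k : Fin N, ‖((dftF N)ᴴ * Ψ) k ℓ‖

/-- Euclidean norm on `ℂ^n`. -/
def norm2 {n : ℕ} (v : Fin n → ℂ) : ℝ := Real.sqrt (∑ i, ‖v i‖ ^ 2)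

/-- `ℓ₁` norm on `ℂ^n`. -/
def norm1 {n : ℕ} (v : Fin n → ℂ) : ℝ := ∑ i, ‖v i‖

/-- `v` has at most `s` nonzero entries. -/
def Sparse {n : ℕ} (s : ℕ) (v : Fin n → ℂ) : Prop :=
  (Finset.univ.filter fun i => v i ≠ 0).card ≤ s

/-- Error of the best `s`-sparse approximation of `g` in `ℓ₁`. -/
def sperr {n : ℕ} (s : ℕ) (g : Fin n → ℂ) : ℝ :=
  sInf {r : ℝ | ∃ h : Fin n → ℂ, Sparse s h ∧ r = norm1 (fun i => h i - g i)}

/-- The 1-periodic signal with Fourier coefficients `c`. -/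
def fcont (c : ℤ → ℂ) (x : ℝ) : ℂ := ∑' ℓ : ℤ, c ℓ * ce (ℓ * x)

/-- Tail `∑_{|ℓ|>Ñ} |c_ℓ|` of the Fourier coefficients. -/
def tailSum (N : ℕ) (c : ℤ → ℂ) : ℝ :=
  ∑' ℓ : ℤ, if Nt N < |ℓ| then ‖c ℓ‖ else 0

/-- The distribution `𝒟` satisfies the deviation model with parameter `θ`. -/
def DevModel (N m : ℕ) (𝒟 : Measure ℝ) (θ : ℝ) : Prop :=
  ∀ j : ℤ, j ≠ 0 → (|j| : ℝ) ≤ 2 * ((N : ℝ) - 1) / m →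
    (2 * N / m) * ‖∫ x, ce (((j * m : ℤ) : ℝ) * x) ∂𝒟‖ ≤ θ

/-- The random nonuniform sample points `t̃_k = (k-1)/m - 1/2 + Δ_k`. -/
def samplePts {Ω : Type*} (m : ℕ) (Δ : Fin m → Ω → ℝ) (ω : Ω) : Fin m → ℝ :=
  fun k => (k : ℝ) / m - 1 / 2 + Δ k ω

end


/-!
With `E_{ku} = e(-(u - Ñ) t̃_k)` (`nudft`) one has `S = N^{-1/2} E F*`, hence `Av = m^{-1/2} E h`
for `h = F* Ψ v`. The entries of `E` are unimodular, so `|(Eh)_k| ≤ ‖h‖₁ ≤ γ ‖v‖₁ ≤ γ √s ‖v‖₂`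
uniformly, and the fourth moment is at most `‖h‖₁² / m²` times the second moment
`𝔼 Σ_k |(Eh)_k|²`. The latter is the quadratic form `Σ_{u,u'} h_u conj(h_{u'}) K(u' - u)` with
`K(j) = 𝔼 Σ_k e(j t̃_k)` (`charSum`). Summing over the grid points `k/m` kills `K(j)` unless
`m ∣ j`; `K(0) = m`, and for `0 < |j| ≤ N - 1` the deviation model gives `|K(j)| ≤ θ m² / (2N)`.
Since at most `(N - 1)/m` frequencies `u' ≠ u` are congruent to `u` mod `m`, the Schur test bounds
the form by `(1 + 2θ) m ‖h‖₂²`, and Parseval gives `‖h‖₂ = ‖Ψv‖₂ ≤ β ‖v‖₂`.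
-/

lemma ce_add (x y : ℝ) : ce (x + y) = ce x * ce y := by
  simp [ce, mul_add, Complex.exp_add]

lemma ce_intCast (n : ℤ) : ce n = 1 := by
  simpa [ce, mul_comm] using Complex.exp_int_mul_two_pi_mul_I n

lemma ce_zero : ce 0 = 1 := by simpa using ce_intCast 0

lemma conj_ce (x : ℝ) : starRingEnd ℂ (ce x) = ce (-x) := by
  simp [ce, ← Complex.exp_conj, map_ofNat]

lemma norm_ce (x : ℝ) : ‖ce x‖ = 1 := by
  simpa [ce, mul_right_comm _ Complex.I] using Complex.norm_exp_ofReal_mul_I (2 * Real.pi * x)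

@[fun_prop]
lemma continuous_ce : Continuous ce := by
  unfold ce; fun_prop

lemma ce_eq_one_iff {x : ℝ} : ce x = 1 ↔ ∃ n : ℤ, x = n := by
  rw [ce, Complex.exp_eq_one_iff]
  refine exists_congr fun n => ?_
  rw [show 2 * (Real.pi : ℂ) * Complex.I * x = x * (2 * Real.pi * Complex.I) by ring,
    mul_left_inj' (by simp [Real.pi_ne_zero, Complex.I_ne_zero])]
  exact_mod_cast Iff.rfl

lemma sum_fin_ce_mul_div (d : ℕ) (j : ℤ) :
    ∑ k : Fin d, ce (j * k / d) = if (d : ℤ) ∣ j then (d : ℂ) else 0 := by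
  rcases Nat.eq_zero_or_pos d with rfl | hd
  · simp
  have hpow : ∀ k : ℕ, ce (j / d) ^ k = ce (j * k / d) := fun k => by
    induction k with
    | zero => simp [ce_zero]
    | succ k ih => rw [pow_succ, ih, ← ce_add]; congr 1; push_cast; ring
  simp_rw [← hpow, Fin.sum_univ_eq_sum_range (fun k => ce (j / d) ^ k)]
  split_ifs with hdvd
  · obtain ⟨c, rfl⟩ := hdvd
    have : ce (((d * c : ℤ) : ℝ) / d) = 1 := by
      rw [show ((d * c : ℤ) : ℝ) / d = (c : ℝ) by push_cast; field_simp]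
      exact ce_intCast c
    simp only [this, one_pow, Finset.sum_const, Finset.card_range, nsmul_one]
  · have hne : ce (j / d) ≠ 1 := by
      intro hc
      obtain ⟨n, hn⟩ := ce_eq_one_iff.1 hc
      rw [div_eq_iff (by positivity)] at hn
      exact hdvd ⟨n, by exact_mod_cast hn.trans (mul_comm _ _)⟩
    rw [geom_sum_eq hne, hpow, mul_div_cancel_right₀ _ (by positivity), ce_intCast]
    simp

lemma two_mul_Nt_add_one {N : ℕ} (hN : Odd N) : 2 * Nt N + 1 = N := by
  obtain ⟨r, rfl⟩ := hN
  unfold Nt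
  omega

lemma sum_Icc_Nt_eq_sum_fin {M : Type*} [AddCommMonoid M] {N : ℕ} (hN : Odd N) (f : ℤ → M) :
    ∑ j ∈ Finset.Icc (-Nt N) (Nt N), f j = ∑ u : Fin N, f (u - Nt N) := by
  have hN' := two_mul_Nt_add_one hN
  rw [Fin.sum_univ_eq_sum_range (fun u => f (u - Nt N))]
  refine Finset.sum_nbij' (fun j => (j + Nt N).toNat) (fun u => u - Nt N) ?_ ?_ ?_ ?_ ?_ <;>
    intro j hj <;> simp only [Finset.mem_Icc, Finset.mem_range] at hj ⊢ <;>
    first | omega | congr 1; omega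

lemma inv_sqrt_mul_inv_sqrt (N : ℕ) :
    ((Real.sqrt N : ℂ))⁻¹ * ((Real.sqrt N : ℂ))⁻¹ = (N : ℂ)⁻¹ := by
  rw [← mul_inv, ← Complex.ofReal_mul, Real.mul_self_sqrt (Nat.cast_nonneg N)]
  simp

lemma dftF_mul_conjTranspose (N : ℕ) : dftF N * (dftF N)ᴴ = 1 := by
  ext p p'
  have hN : (N : ℂ) ≠ 0 := Nat.cast_ne_zero.2 p.pos.ne'
  have hterm : ∀ u : Fin N, dftF N p u * star (dftF N p' u)
      = (N : ℂ)⁻¹ * ce (-(((p' : ℤ) - p : ℤ) * Nt N) / N)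
          * ce (((p' : ℤ) - p : ℤ) * (u : ℕ) / N) := by
    intro u
    simp only [dftF, star_mul', star_inv₀, Complex.star_def, Complex.conj_ofReal, conj_ce]
    rw [← inv_sqrt_mul_inv_sqrt]
    calc _ = (Real.sqrt N : ℂ)⁻¹ * (Real.sqrt N : ℂ)⁻¹ *
          ce (-tg N p * ((u : ℤ) - Nt N) + -(-tg N p' * ((u : ℤ) - Nt N))) := by
          rw [ce_add]; ring
      _ = _ := by
          rw [mul_assoc _ (ce _), ← ce_add]
          congr 2
          unfold tg; push_cast; field_simp; ring
  simp_rw [Matrix.mul_apply, Matrix.conjTranspose_apply, hterm, ← Finset.mul_sum,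
    sum_fin_ce_mul_div, Matrix.one_apply]
  by_cases hpp : p = p'
  · subst hpp
    simp [ce_zero, hN]
  · have hndvd : ¬ (N : ℤ) ∣ (p' : ℤ) - p := fun hdvd => by
      have := Int.eq_zero_of_abs_lt_dvd hdvd (by rw [abs_lt]; omega)
      exact hpp (Fin.ext (by omega))
    simp [hpp, hndvd]

lemma sum_norm_sq_eq_re_star_dotProduct {ι : Type*} [Fintype ι] (x : ι → ℂ) :
    ∑ i, ‖x i‖ ^ 2 = (star x ⬝ᵥ x).re := by
  simp [dotProduct, Complex.re_sum, Complex.sq_norm, Complex.normSq_apply]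

lemma sum_norm_sq_conjTranspose_mulVec {ι κ : Type*} [Fintype ι] [Fintype κ] [DecidableEq ι]
    {U : Matrix ι κ ℂ} (hU : U * Uᴴ = 1) (g : ι → ℂ) :
    ∑ u, ‖(Uᴴ *ᵥ g) u‖ ^ 2 = ∑ p, ‖g p‖ ^ 2 := by
  rw [sum_norm_sq_eq_re_star_dotProduct, sum_norm_sq_eq_re_star_dotProduct, Matrix.star_mulVec,
    Matrix.conjTranspose_conjTranspose, ← Matrix.dotProduct_mulVec, Matrix.mulVec_mulVec, hU,
    Matrix.one_mulVec]

noncomputable def nudft (N : ℕ) {m : ℕ} (tt : Fin m → ℝ) : Matrix (Fin m) (Fin N) ℂ :=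
  fun k u => ce (-(((u : ℤ) - Nt N : ℤ) * tt k))

lemma dirS_eq_smul_nudft_mul_conjTranspose {N : ℕ} (hN : Odd N) (m : ℕ) (tt : Fin m → ℝ) :
    dirS N m tt = ((Real.sqrt N : ℂ))⁻¹ • (nudft N tt * (dftF N)ᴴ) := by
  ext k p
  simp only [dirS, Matrix.smul_apply, Matrix.mul_apply, Matrix.conjTranspose_apply, nudft, dftF,
    sum_Icc_Nt_eq_sum_fin hN, smul_eq_mul, Finset.mul_sum, star_mul', star_inv₀,
    Complex.star_def, Complex.conj_ofReal, conj_ce]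
  refine Finset.sum_congr rfl fun u _ => ?_
  rw [← inv_sqrt_mul_inv_sqrt]
  calc _ = (Real.sqrt N : ℂ)⁻¹ * (Real.sqrt N : ℂ)⁻¹ *
        (ce (-(((u : ℤ) - Nt N : ℤ) * tt k)) * ce (-(-tg N p * ((u : ℤ) - Nt N)))) := by
        rw [← ce_add]; congr 2; push_cast; ring
    _ = _ := by ring

lemma norm2_sq {n : ℕ} (v : Fin n → ℂ) : norm2 v ^ 2 = ∑ i, ‖v i‖ ^ 2 :=
  Real.sq_sqrt (by positivity)

lemma norm1_sq_le_of_sparse {n s : ℕ} {v : Fin n → ℂ} (hv : Sparse s v) :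
    norm1 v ^ 2 ≤ s * norm2 v ^ 2 := by
  set T := Finset.univ.filter fun i => v i ≠ 0
  have hsupp : norm1 v = ∑ i ∈ T, ‖v i‖ :=
    (Finset.sum_filter_of_ne fun i _ hi => by simpa using hi).symm
  calc norm1 v ^ 2 ≤ T.card * ∑ i ∈ T, ‖v i‖ ^ 2 := hsupp ▸ sq_sum_le_card_mul_sum_sq
    _ ≤ s * norm2 v ^ 2 := by
      rw [norm2_sq]
      gcongr
      · exact_mod_cast hv
      · exact Finset.subset_univ T

lemma sum_norm_mulVec_le {ι κ : Type*} [Fintype ι] [Fintype κ] (M : Matrix ι κ ℂ) (v : κ → ℂ) :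
    ∑ i, ‖(M *ᵥ v) i‖ ≤ (⨆ l, ∑ i, ‖M i l‖) * ∑ l, ‖v l‖ := by
  calc ∑ i, ‖(M *ᵥ v) i‖ ≤ ∑ i, ∑ l, ‖M i l‖ * ‖v l‖ :=
        Finset.sum_le_sum fun i _ => (norm_sum_le _ _).trans_eq (by simp_rw [norm_mul])
    _ = ∑ l, (∑ i, ‖M i l‖) * ‖v l‖ := by rw [Finset.sum_comm]; simp_rw [Finset.sum_mul]
    _ ≤ ∑ l, (⨆ l, ∑ i, ‖M i l‖) * ‖v l‖ := by
      gcongr with l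
      exact le_ciSup (f := fun l => ∑ i, ‖M i l‖) (Set.finite_range _).bddAbove l
    _ = _ := by rw [Finset.mul_sum]

lemma norm_nudft_mulVec_le (N : ℕ) {m : ℕ} (tt : Fin m → ℝ) (h : Fin N → ℂ) (k : Fin m) :
    ‖(nudft N tt *ᵥ h) k‖ ≤ ∑ u, ‖h u‖ :=
  (norm_sum_le Finset.univ fun u => nudft N tt k u * h u).trans_eq (by simp [nudft, norm_ce])

lemma norm_sq_sum_eq_re_sum_sum {ι : Type*} [Fintype ι] (z : ι → ℂ) :
    ‖∑ i, z i‖ ^ 2 = (∑ i, ∑ j, z i * starRingEnd ℂ (z j)).re := by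
  rw [← Finset.sum_mul_sum, ← map_sum, Complex.mul_conj, Complex.ofReal_re, Complex.sq_norm]

lemma sum_norm_sq_nudft_mulVec (N : ℕ) {m : ℕ} (tt : Fin m → ℝ) (h : Fin N → ℂ) :
    ∑ k, ‖(nudft N tt *ᵥ h) k‖ ^ 2
      = (∑ u, ∑ u', h u * starRingEnd ℂ (h u') * ∑ k, ce (((u' : ℤ) - u : ℤ) * tt k)).re := by
  simp_rw [Matrix.mulVec, dotProduct, norm_sq_sum_eq_re_sum_sum, ← Complex.re_sum,
    Finset.mul_sum]
  rw [Finset.sum_comm]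
  refine congrArg _ (Finset.sum_congr rfl fun u _ => ?_)
  rw [Finset.sum_comm]
  refine Finset.sum_congr rfl fun u' _ => Finset.sum_congr rfl fun k _ => ?_
  simp only [nudft, map_mul, conj_ce]
  rw [show ce (((u' : ℤ) - u : ℤ) * tt k)
      = ce (-(((u : ℤ) - Nt N : ℤ) * tt k)) * ce (-(-(((u' : ℤ) - Nt N : ℤ) * tt k))) by
    rw [← ce_add]; congr 1; push_cast; ring]
  ring

lemma sum_sum_mul_mul_le_of_symm {ι : Type*} [Fintype ι] {w : ι → ι → ℝ}
    (hw : ∀ i j, 0 ≤ w i j) (hsymm : ∀ i j, w i j = w j i) {C : ℝ} (hC : ∀ i, ∑ j, w i j ≤ C)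
    (a : ι → ℝ) : ∑ i, ∑ j, w i j * (a i * a j) ≤ C * ∑ i, a i ^ 2 := by
  have hcol : ∑ i, ∑ j, w i j * a j ^ 2 = ∑ i, ∑ j, w i j * a i ^ 2 := by
    rw [Finset.sum_comm]
    exact Finset.sum_congr rfl fun i _ => Finset.sum_congr rfl fun j _ => by rw [hsymm]
  calc ∑ i, ∑ j, w i j * (a i * a j)
      ≤ ∑ i, ∑ j, (w i j * a i ^ 2 + w i j * a j ^ 2) / 2 := by
        gcongr with i _ j _
        nlinarith [mul_nonneg (hw i j) (sq_nonneg (a i - a j))]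
    _ = ∑ i, (∑ j, w i j) * a i ^ 2 := by
        simp_rw [add_div, Finset.sum_add_distrib, ← Finset.sum_div, hcol, Finset.sum_mul]
        ring
    _ ≤ ∑ i, C * a i ^ 2 := by gcongr with i; exact hC i
    _ = C * ∑ i, a i ^ 2 := (Finset.mul_sum _ _ _).symm

lemma card_erase_filter_dvd_sub_le (m : ℕ) {N : ℕ} (u : Fin N) :
    ((Finset.univ.filter fun u' : Fin N => (m : ℤ) ∣ (u' : ℤ) - u).erase u).card
      ≤ (N - 1) / m := by
  set s := Finset.univ.filter fun u' : Fin N => (m : ℤ) ∣ (u' : ℤ) - u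
  have hmod : ∀ u' ∈ s, (u' : ℕ) % m = (u : ℕ) % m := fun u' hu' =>
    (Nat.modEq_iff_dvd.2 (Finset.mem_filter.1 hu').2).symm
  -- a residue class mod `m` in `{0, …, N - 1}` is parametrised by the quotients `u' / m`
  have hs : s.card ≤ (N - 1) / m + 1 := by
    refine (Finset.card_le_card_of_injOn (t := Finset.range ((N - 1) / m + 1))
      (fun u' : Fin N => (u' : ℕ) / m) (fun u' _ => ?_) fun a ha b hb hab => ?_).trans_eq
      (Finset.card_range _)
    · simpa [Nat.lt_succ_iff] using Nat.div_le_div_right (Nat.le_sub_one_of_lt u'.isLt)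
    · rw [Fin.ext_iff, ← Nat.div_add_mod a m, ← Nat.div_add_mod b m, hmod a ha, hmod b hb]
      exact congrArg (m * · + _) hab
  rw [Finset.card_erase_of_mem (by simp [s])]
  exact Nat.sub_le_iff_le_add.2 hs

lemma integral_sum_norm_pow_four_le {Ω ι : Type*} [MeasurableSpace Ω] {μ : Measure Ω}
    [IsFiniteMeasure μ] [Fintype ι] {Y : ι → Ω → ℂ} (hY : ∀ k, Measurable (Y k)) {B : ℝ}
    (hB : ∀ k ω, ‖Y k ω‖ ≤ B) :
    ∫ ω, ∑ k, ‖Y k ω‖ ^ 4 ∂μ ≤ B ^ 2 * ∫ ω, ∑ k, ‖Y k ω‖ ^ 2 ∂μ := by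
  have hsq : ∀ k ω, ‖Y k ω‖ ^ 2 ≤ B ^ 2 := fun k ω => pow_le_pow_left₀ (norm_nonneg _) (hB k ω) 2
  have hint : Integrable (fun ω => ∑ k, ‖Y k ω‖ ^ 2) μ :=
    integrable_finsetSum _ fun k _ => Integrable.of_bound (by fun_prop) (B ^ 2)
      (Filter.Eventually.of_forall fun ω => by simpa using hsq k ω)
  rw [← integral_const_mul]
  refine integral_mono_of_nonneg (Filter.Eventually.of_forall fun _ => by positivity)
    (hint.const_mul _) (Filter.Eventually.of_forall fun ω => ?_)
  simp only [Finset.mul_sum]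
  gcongr with k
  calc ‖Y k ω‖ ^ 4 = ‖Y k ω‖ ^ 2 * ‖Y k ω‖ ^ 2 := by ring
    _ ≤ B ^ 2 * ‖Y k ω‖ ^ 2 := mul_le_mul_of_nonneg_right (hsq k ω) (by positivity)

section Moments

variable {Ω : Type*} [MeasurableSpace Ω] {μ : Measure Ω} {m : ℕ}

noncomputable def charSum (μ : Measure Ω) (tt : Ω → Fin m → ℝ) (j : ℤ) : ℂ :=
  ∑ k, ∫ ω, ce (j * tt ω k) ∂μ

lemma integrable_ce_comp [IsFiniteMeasure μ] {f : Ω → ℝ} (hf : Measurable f) :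
    Integrable (fun ω => ce (f ω)) μ :=
  Integrable.of_bound (by fun_prop) 1 (Filter.Eventually.of_forall fun _ => (norm_ce _).le)

lemma measurable_nudft_mulVec_apply (N : ℕ) {tt : Ω → Fin m → ℝ}
    (htt : ∀ k, Measurable fun ω => tt ω k) (h : Fin N → ℂ) (k : Fin m) :
    Measurable fun ω => (nudft N (tt ω) *ᵥ h) k := by
  have := htt k
  simp only [Matrix.mulVec, dotProduct, nudft]
  fun_prop

lemma integral_sum_norm_sq_nudft_mulVec [IsFiniteMeasure μ] (N : ℕ) {tt : Ω → Fin m → ℝ}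
    (htt : ∀ k, Measurable fun ω => tt ω k) (h : Fin N → ℂ) :
    ∫ ω, ∑ k, ‖(nudft N (tt ω) *ᵥ h) k‖ ^ 2 ∂μ
      = (∑ u, ∑ u', h u * starRingEnd ℂ (h u') * charSum μ tt ((u' : ℤ) - u)).re := by
  have hint : ∀ (j : ℤ) k, Integrable (fun ω => ce (j * tt ω k)) μ :=
    fun j k => integrable_ce_comp ((htt k).const_mul _)
  have hint' : ∀ u u' : Fin N, Integrable (fun ω =>
      h u * starRingEnd ℂ (h u') * ∑ k, ce (((u' : ℤ) - u : ℤ) * tt ω k)) μ :=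
    fun u u' => (integrable_finsetSum _ fun k _ => hint _ k).const_mul _
  simp_rw [sum_norm_sq_nudft_mulVec]
  refine (integral_re (integrable_finsetSum _ fun u _ =>
    integrable_finsetSum _ fun u' _ => hint' u u')).trans (congrArg Complex.re ?_)
  rw [integral_finsetSum _ fun u _ => integrable_finsetSum _ fun u' _ => hint' u u']
  refine Finset.sum_congr rfl fun u _ => ?_
  rw [integral_finsetSum _ fun u' _ => hint' u u']
  refine Finset.sum_congr rfl fun u' _ => ?_
  rw [integral_const_mul, integral_finsetSum _ fun k _ => hint _ k, charSum]

lemma charSum_neg (tt : Ω → Fin m → ℝ) (j : ℤ) :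
    charSum μ tt (-j) = starRingEnd ℂ (charSum μ tt j) := by
  simp [charSum, ← integral_conj, conj_ce]

lemma charSum_zero [IsProbabilityMeasure μ] (tt : Ω → Fin m → ℝ) : charSum μ tt 0 = m := by
  simp [charSum, ce_zero]

variable {Δ : Fin m → Ω → ℝ} {𝒟 : Measure ℝ}

lemma charSum_samplePts (hmeas : ∀ k, Measurable (Δ k)) (hdist : ∀ k, μ.map (Δ k) = 𝒟) (j : ℤ) :
    charSum μ (samplePts m Δ) j
      = (if (m : ℤ) ∣ j then (m : ℂ) else 0) * ce (-j / 2) * ∫ x, ce (j * x) ∂𝒟 := by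
  have hk : ∀ k : Fin m, ∫ ω, ce (j * samplePts m Δ ω k) ∂μ
      = ce (j * k / m) * ce (-j / 2) * ∫ x, ce (j * x) ∂𝒟 := by
    intro k
    have hsplit : ∀ ω, ce (j * samplePts m Δ ω k) = ce (j * k / m) * ce (-j / 2) * ce (j * Δ k ω) :=
      fun ω => by rw [← ce_add, ← ce_add]; congr 1; simp only [samplePts]; ring
    simp_rw [hsplit, integral_const_mul]
    rw [← hdist k, integral_map (hmeas k).aemeasurable (by fun_prop)]
  simp_rw [charSum, hk, ← Finset.sum_mul, sum_fin_ce_mul_div]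


lemma norm_integral_ce_le_of_devModel {N : ℕ} {θ : ℝ} (hm : 0 < m) (hdev : DevModel N m 𝒟 θ)
    {j : ℤ} (hj0 : j ≠ 0) (hjN : |j| * m ≤ N - 1) :
    ‖∫ x, ce ((j * m : ℤ) * x) ∂𝒟‖ ≤ θ * m / (2 * N) := by
  have hm' : (0 : ℝ) < m := by exact_mod_cast hm
  have hjN' : (|j| : ℝ) * m ≤ N - 1 := by exact_mod_cast hjN
  have hN : (0 : ℝ) < N := by
    have : (1 : ℝ) ≤ |(j : ℝ)| := by rw [← Int.cast_abs]; exact_mod_cast Int.one_le_abs hj0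
    nlinarith
  have hdevj := hdev j hj0 (by rw [le_div_iff₀ hm']; nlinarith [abs_nonneg (j : ℝ)])
  rw [le_div_iff₀ (by positivity)]
  calc _ = 2 * N / m * ‖∫ x, ce ((j * m : ℤ) * x) ∂𝒟‖ * m := by field_simp
    _ ≤ θ * m := by gcongr

lemma norm_charSum_samplePts_le {N : ℕ} {θ : ℝ} (hm : 0 < m) (hmeas : ∀ k, Measurable (Δ k))
    (hdist : ∀ k, μ.map (Δ k) = 𝒟) (hdev : DevModel N m 𝒟 θ) {j : ℤ} (hj0 : j ≠ 0)
    (hjN : |j| ≤ N - 1) :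
    ‖charSum μ (samplePts m Δ) j‖ ≤ if (m : ℤ) ∣ j then m * (θ * m / (2 * N)) else 0 := by
  rw [charSum_samplePts hmeas hdist]
  split_ifs with hdvd
  · obtain ⟨c, rfl⟩ := hdvd
    have hc0 : c ≠ 0 := by rintro rfl; simp at hj0
    rw [norm_mul, norm_mul, norm_ce, mul_one, Complex.norm_natCast, mul_comm (m : ℤ) c]
    gcongr
    refine norm_integral_ce_le_of_devModel hm hdev hc0 ?_
    rwa [abs_mul, Nat.abs_cast, mul_comm] at hjN
  · simp

lemma sum_norm_charSum_samplePts_sub_le [IsProbabilityMeasure μ] {N : ℕ} {θ : ℝ} (hm : 0 < m)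
    (hmeas : ∀ k, Measurable (Δ k)) (hdist : ∀ k, μ.map (Δ k) = 𝒟) (hθ : 0 ≤ θ)
    (hdev : DevModel N m 𝒟 θ) (u : Fin N) :
    ∑ u' : Fin N, ‖charSum μ (samplePts m Δ) ((u' : ℤ) - u)‖ ≤ (1 + 2 * θ) * m := by
  have hm' : (0 : ℝ) < m := by exact_mod_cast hm
  have hN : (1 : ℝ) ≤ N := by exact_mod_cast u.pos
  have hcount : ((((Finset.univ.filter fun u' : Fin N => (m : ℤ) ∣ (u' : ℤ) - u).erase u).card : ℕ)
      : ℝ) ≤ (N - 1) / m :=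
    (Nat.cast_le.2 (card_erase_filter_dvd_sub_le m u)).trans
      (Nat.cast_div_le.trans_eq (by rw [Nat.cast_pred u.pos]))
  rw [← Finset.add_sum_erase _ _ (Finset.mem_univ u), sub_self, charSum_zero, Complex.norm_natCast]
  calc (m : ℝ) + ∑ u' ∈ Finset.univ.erase u, ‖charSum μ (samplePts m Δ) ((u' : ℤ) - u)‖
      ≤ m + ∑ u' ∈ Finset.univ.erase u,
          if (m : ℤ) ∣ (u' : ℤ) - u then m * (θ * m / (2 * N)) else 0 := by
        gcongr with u' hu'
        refine norm_charSum_samplePts_le hm hmeas hdist hdev ?_ ?_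
        · exact sub_ne_zero.2 fun h => (Finset.ne_of_mem_erase hu') (Fin.ext (by exact_mod_cast h))
        · rw [abs_le]; omega
    _ = m + ((Finset.univ.filter fun u' : Fin N => (m : ℤ) ∣ (u' : ℤ) - u).erase u).card
          * (m * (θ * m / (2 * N))) := by
        rw [← Finset.sum_filter, Finset.sum_const, nsmul_eq_mul, Finset.filter_erase]
    _ ≤ m + (N - 1) / m * (m * (θ * m / (2 * N))) := by gcongr
    _ ≤ (1 + 2 * θ) * m := by
        rw [show ((N : ℝ) - 1) / m * (m * (θ * m / (2 * N))) = θ * m * ((N - 1) / (2 * N)) by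
          field_simp]
        have : ((N : ℝ) - 1) / (2 * N) ≤ 2 := by rw [div_le_iff₀ (by positivity)]; linarith
        nlinarith [mul_nonneg hθ hm'.le]

lemma integral_sum_norm_sq_nudft_samplePts_le [IsProbabilityMeasure μ] {N : ℕ} {θ : ℝ}
    (hm : 0 < m) (hmeas : ∀ k, Measurable (Δ k)) (hdist : ∀ k, μ.map (Δ k) = 𝒟) (hθ : 0 ≤ θ)
    (hdev : DevModel N m 𝒟 θ) (h : Fin N → ℂ) :
    ∫ ω, ∑ k, ‖(nudft N (samplePts m Δ ω) *ᵥ h) k‖ ^ 2 ∂μ ≤ (1 + 2 * θ) * m * ∑ u, ‖h u‖ ^ 2 := by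
  rw [integral_sum_norm_sq_nudft_mulVec (tt := samplePts m Δ) N (fun k => (hmeas k).const_add _) h]
  set K := charSum μ (samplePts m Δ)
  calc _ ≤ ∑ u : Fin N, ∑ u' : Fin N, ‖K ((u' : ℤ) - u)‖ * (‖h u‖ * ‖h u'‖) := by
        refine (Complex.re_le_norm _).trans ((norm_sum_le _ _).trans
          (Finset.sum_le_sum fun u _ => (norm_sum_le _ _).trans_eq
            (Finset.sum_congr rfl fun u' _ => ?_)))
        rw [norm_mul, norm_mul, Complex.norm_conj]
        ring
    _ ≤ _ := sum_sum_mul_mul_le_of_symm (fun _ _ => norm_nonneg _)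
        (fun u u' => by rw [← neg_sub (u' : ℤ), charSum_neg, Complex.norm_conj])
        (sum_norm_charSum_samplePts_sub_le hm hmeas hdist hθ hdev) _

lemma integral_sum_norm_pow_four_nudft_samplePts_le [IsProbabilityMeasure μ] {N : ℕ} {θ : ℝ}
    (hm : 0 < m) (hmeas : ∀ k, Measurable (Δ k)) (hdist : ∀ k, μ.map (Δ k) = 𝒟) (hθ : 0 ≤ θ)
    (hdev : DevModel N m 𝒟 θ) (h : Fin N → ℂ) :
    ∫ ω, ∑ k, ‖(nudft N (samplePts m Δ ω) *ᵥ h) k‖ ^ 4 ∂μ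
      ≤ (∑ u, ‖h u‖) ^ 2 * ((1 + 2 * θ) * m * ∑ u, ‖h u‖ ^ 2) :=
  (integral_sum_norm_pow_four_le
    (fun k => measurable_nudft_mulVec_apply (tt := samplePts m Δ) N
      (fun k => (hmeas k).const_add _) h k)
    (fun k _ => norm_nudft_mulVec_le N _ h k)).trans
    (mul_le_mul_of_nonneg_left (integral_sum_norm_sq_nudft_samplePts_le hm hmeas hdist hθ hdev h)
      (sq_nonneg _))

end Moments

lemma norm_smul_dirS_mul_mulVec_pow_four {N : ℕ} (hN : Odd N) (m : ℕ) (tt : Fin m → ℝ) {n : ℕ}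
    (Ψ : Matrix (Fin N) (Fin n) ℂ) (v : Fin n → ℂ) (k : Fin m) :
    ‖((((Real.sqrt N : ℂ) / (Real.sqrt m : ℂ)) • (dirS N m tt * Ψ)) *ᵥ v) k‖ ^ 4
      = ‖(nudft N tt *ᵥ ((dftF N)ᴴ *ᵥ (Ψ *ᵥ v))) k‖ ^ 4 / m ^ 2 := by
  have hsqrt : (Real.sqrt N : ℂ) ≠ 0 := by
    simpa using (Real.sqrt_pos.2 (Nat.cast_pos.2 hN.pos)).ne'
  have hA : (((Real.sqrt N : ℂ) / (Real.sqrt m : ℂ)) • (dirS N m tt * Ψ)) *ᵥ v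
      = ((Real.sqrt m : ℂ))⁻¹ • (nudft N tt *ᵥ ((dftF N)ᴴ *ᵥ (Ψ *ᵥ v))) := by
    rw [dirS_eq_smul_nudft_mul_conjTranspose hN, Matrix.smul_mul, smul_smul, Matrix.smul_mulVec,
      Matrix.mulVec_mulVec, Matrix.mulVec_mulVec, Matrix.mul_assoc]
    congr 1
    field_simp
  rw [hA, Pi.smul_apply, norm_smul, norm_inv, Complex.norm_real,
    Real.norm_of_nonneg (Real.sqrt_nonneg _), mul_pow, inv_pow,
    show Real.sqrt m ^ 4 = (Real.sqrt m ^ 2) ^ 2 by ring, Real.sq_sqrt (Nat.cast_nonneg m)]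
  ring

theorem fourth_moment_bound_general
    (N n m s : ℕ) (hN : Odd N) (hm : 0 < m)
    (Ψ : Matrix (Fin N) (Fin n) ℂ) (β : ℝ)
    (hΨ : ∀ w : Fin n → ℂ, norm2 (Ψ.mulVec w) ≤ β * norm2 w)
    (Ωs : Type) (mΩ : MeasurableSpace Ωs) (μ : Measure Ωs) (hμ : IsProbabilityMeasure μ)
    (Δ : Fin m → Ωs → ℝ) (hmeas : ∀ k, Measurable (Δ k))
    (𝒟 : Measure ℝ)
    (hdist : ∀ k, Measure.map (Δ k) μ = 𝒟)
    (θ : ℝ) (hθ : 0 ≤ θ) (hdev : DevModel N m 𝒟 θ)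
    (v : Fin n → ℂ) (hv : Sparse s v) :
    (∫ ω, ∑ k : Fin m, ‖(((Real.sqrt N : ℂ) / (Real.sqrt m : ℂ)) •
        (dirS N m (samplePts m Δ ω) * Ψ)).mulVec v k‖ ^ 4 ∂μ) ≤
      s * β ^ 2 * dftIncoh N n Ψ ^ 2 * (1 + 2 * θ) * norm2 v ^ 4 / m := by
  set h := (dftF N)ᴴ *ᵥ (Ψ *ᵥ v)
  have hl1 : (∑ u, ‖h u‖) ^ 2 ≤ dftIncoh N n Ψ ^ 2 * (s * norm2 v ^ 2) := by
    have hcol := sum_norm_mulVec_le ((dftF N)ᴴ * Ψ) v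
    rw [← Matrix.mulVec_mulVec] at hcol
    calc _ ≤ (dftIncoh N n Ψ * norm1 v) ^ 2 := by gcongr; exact hcol
      _ ≤ _ := by rw [mul_pow]; gcongr; exact norm1_sq_le_of_sparse hv
  have hl2 : ∑ u, ‖h u‖ ^ 2 ≤ β ^ 2 * norm2 v ^ 2 := by
    rw [sum_norm_sq_conjTranspose_mulVec (dftF_mul_conjTranspose N), ← norm2_sq, ← mul_pow]
    exact pow_le_pow_left₀ (Real.sqrt_nonneg _) (hΨ v) 2
  simp_rw [norm_smul_dirS_mul_mulVec_pow_four hN, ← Finset.sum_div]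
  rw [integral_div]
  have hm' : (m : ℝ) ≠ 0 := Nat.cast_ne_zero.2 hm.ne'
  calc _ ≤ (∑ u, ‖h u‖) ^ 2 * ((1 + 2 * θ) * m * ∑ u, ‖h u‖ ^ 2) / m ^ 2 := by
        gcongr
        exact integral_sum_norm_pow_four_nudft_samplePts_le hm hmeas hdist hθ hdev h
    _ = (∑ u, ‖h u‖) ^ 2 * (∑ u, ‖h u‖ ^ 2) * (1 + 2 * θ) / m := by field_simp
    _ ≤ dftIncoh N n Ψ ^ 2 * (s * norm2 v ^ 2) * (β ^ 2 * norm2 v ^ 2) * (1 + 2 * θ) / m := by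
        gcongr
    _ = _ := by ring

/-- fourth-moment bound
`E[Σ_k |(Av)_k|⁴] ≤ s β² γ² (1+2θ) ‖v‖₂⁴ / m` for `A = (√N/√m) S Ψ` and `s`-sparse `v`. -/
theorem fourth_moment_bound
    (N n m s : ℕ) (hN : Odd N) (hNpos : 0 < N) (hm : 0 < m) (hn : 0 < n)
    (Ψ : Matrix (Fin N) (Fin n) ℂ) (β : ℝ)
    (hΨ : ∀ w : Fin n → ℂ, norm2 (Ψ.mulVec w) ≤ β * norm2 w)
    (Ωs : Type) (mΩ : MeasurableSpace Ωs) (μ : Measure Ωs) (hμ : IsProbabilityMeasure μ)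
    (Δ : Fin m → Ωs → ℝ) (hmeas : ∀ k, Measurable (Δ k))
    (hindep : ProbabilityTheory.iIndepFun Δ μ)
    (𝒟 : Measure ℝ) (h𝒟 : IsProbabilityMeasure 𝒟)
    (hdist : ∀ k, Measure.map (Δ k) μ = 𝒟)
    (θ : ℝ) (hθ : 0 ≤ θ) (hdev : DevModel N m 𝒟 θ)
    (v : Fin n → ℂ) (hv : Sparse s v) :
    (∫ ω, ∑ k : Fin m, ‖(((Real.sqrt N : ℂ) / (Real.sqrt m : ℂ)) •
        (dirS N m (samplePts m Δ ω) * Ψ)).mulVec v k‖ ^ 4 ∂μ) ≤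
      s * β ^ 2 * dftIncoh N n Ψ ^ 2 * (1 + 2 * θ) * norm2 v ^ 4 / m :=
  fourth_moment_bound_general N n m s hN hm Ψ β hΨ Ωs mΩ μ hμ Δ hmeas 𝒟 hdist θ hθ hdev v hv
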